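/- For all (f,u), (g,v), (h,w) ∈ g̃ and all c₁, c₂ ∈ ℂ, set P = f·g_x − f_x·g + c₂·f_y and Q = f·v_x + 2·f_x·v − u_x·g − 2·u·g_x + c₁·f_{xxx} + c₂·u_y (the coadjoint action formula âd*_{(f,u)}(g,v) = (P,Q)). Then ∫₀^{2π}∫₀^{2π} (h·Q + P·w) dx dy + ∫₀^{2π}∫₀^{2π} [ (f·h_x − f_x·h)·v + g·(f·w_x + 2·f_x·w − h·u_x − 2·h_x·u) ] dx dy + c₁·∫₀^{2π}∫₀^{2π} f·h_{xxx} dx dy + c₂·∫₀^{2π}∫₀^{2π} (f·w_y − h·u_y) dx dy = 0. That is, formula (P,Q) gives the coadjoint action of the centrally extended Lie algebra ĝ with central charges (c₁,c₂): ⟨âd*_a m, b⟩ = −⟨m,[a,b]⟩ − c₁·μ₁(a,b) − c₂·μ₂(a,b). -/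

import Mathlib

/-!
The four integrals combine into a single integrand which, by the Leibniz rule, is
`∂ₓ Φ + c₂ ∂_y (f w)` for the explicit potential
`Φ = f h v + f g w − 2 g h u + c₁ (h f_xx − h_x f_x + h_xx f)`.
The integral over a period of the derivative of a periodic function vanishes (fundamental
theorem of calculus in the inner variable; for `∂_y`, after swapping the integrals by Fubini).
-/

open Real intervalIntegral
open scoped ContDiff

noncomputable section

/-- Functions on `ℝ²` (representing functions on the 2-torus `S¹ × S¹`). -/
abbrev F2 : Type := ℝ × ℝ → ℂ

/-- `C∞₂π(ℝ²,ℂ)`: smooth functions `ℝ² → ℂ` which are `2π`-periodic in each variable. -/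
def SmoothPer2 (f : F2) : Prop :=
  ContDiff ℝ ∞ f ∧ (∀ p : ℝ × ℝ, f (p.1 + 2 * π, p.2) = f p)
    ∧ (∀ p : ℝ × ℝ, f (p.1, p.2 + 2 * π) = f p)

/-- Partial derivative in the first variable `x`. -/
def pdx (f : F2) : F2 := fun p => deriv (fun t => f (t, p.2)) p.1

/-- Partial derivative in the second variable `y`. -/
def pdy (f : F2) : F2 := fun p => deriv (fun t => f (p.1, t)) p.2

/-- Double integral `∫₀^{2π}∫₀^{2π} f dx dy` over the torus. -/
def integ2 (f : F2) : ℂ := ∫ y in (0:ℝ)..(2 * π), ∫ x in (0:ℝ)..(2 * π), f (x, y)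

/-- Membership in the looped cotangent Virasoro algebra `g̃`: a pair `(f,u)` of
functions in `C∞₂π(ℝ²,ℂ)`, `f` representing the loop of vector fields `f(x,y)·∂/∂x`
and `u` the loop of quadratic differentials `u(x,y)·dx²`. -/
def MemG (a : F2 × F2) : Prop := SmoothPer2 a.1 ∧ SmoothPer2 a.2

/-- The Lie bracket of the looped cotangent Virasoro algebra `g̃ = L(Vect(S¹) ⋉ F₂)`:
`[(f,u),(g,v)] = (f·g_x − f_x·g, f·v_x + 2·f_x·v − g·u_x − 2·g_x·u)`. -/
def gBracket (a b : F2 × F2) : F2 × F2 :=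
  (fun p => a.1 p * pdx b.1 p - pdx a.1 p * b.1 p,
   fun p => a.1 p * pdx b.2 p + 2 * pdx a.1 p * b.2 p
     - b.1 p * pdx a.2 p - 2 * pdx b.1 p * a.2 p)

section Calculus

variable {F : F2} {m n : WithTop ℕ∞}

theorem hasDerivAt_pdx (hF : Differentiable ℝ F) (x y : ℝ) :
    HasDerivAt (fun t => F (t, y)) (pdx F (x, y)) x :=
  ((hF (x, y)).comp x (differentiableAt_id.prodMk (differentiableAt_const y))).hasDerivAt

theorem hasDerivAt_pdy (hF : Differentiable ℝ F) (x y : ℝ) :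
    HasDerivAt (fun t => F (x, t)) (pdy F (x, y)) y :=
  ((hF (x, y)).comp y ((differentiableAt_const x).prodMk differentiableAt_id)).hasDerivAt

theorem pdx_eq_fderiv (hF : Differentiable ℝ F) : pdx F = fun p => fderiv ℝ F p (1, 0) := by
  funext p
  have hline : HasDerivAt (fun t : ℝ => (t, p.2)) ((1 : ℝ), (0 : ℝ)) p.1 :=
    (hasDerivAt_id p.1).prodMk (hasDerivAt_const p.1 p.2)
  exact ((hF p).hasFDerivAt.comp_hasDerivAt p.1 hline).deriv

theorem pdy_eq_fderiv (hF : Differentiable ℝ F) : pdy F = fun p => fderiv ℝ F p (0, 1) := by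
  funext p
  have hline : HasDerivAt (fun t : ℝ => (p.1, t)) ((0 : ℝ), (1 : ℝ)) p.2 :=
    (hasDerivAt_const p.2 p.1).prodMk (hasDerivAt_id p.2)
  exact ((hF p).hasFDerivAt.comp_hasDerivAt p.2 hline).deriv

theorem contDiff_pdx (hF : ContDiff ℝ n F) (hmn : m + 1 ≤ n) : ContDiff ℝ m (pdx F) := by
  rw [pdx_eq_fderiv ((hF.of_le (le_add_self.trans hmn)).differentiable one_ne_zero)]
  exact (hF.fderiv_right hmn).clm_apply contDiff_const

theorem contDiff_pdy (hF : ContDiff ℝ n F) (hmn : m + 1 ≤ n) : ContDiff ℝ m (pdy F) := by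
  rw [pdy_eq_fderiv ((hF.of_le (le_add_self.trans hmn)).differentiable one_ne_zero)]
  exact (hF.fderiv_right hmn).clm_apply contDiff_const

theorem continuous_pdx (hF : ContDiff ℝ 1 F) : Continuous (pdx F) :=
  (contDiff_pdx (m := 0) hF le_rfl).continuous

theorem continuous_pdy (hF : ContDiff ℝ 1 F) : Continuous (pdy F) :=
  (contDiff_pdy (m := 0) hF le_rfl).continuous

end Calculus

namespace SmoothPer2

variable {F G : F2}

theorem add (hF : SmoothPer2 F) (hG : SmoothPer2 G) : SmoothPer2 (fun p => F p + G p) :=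
  ⟨hF.1.add hG.1, fun p => by simp only [hF.2.1 p, hG.2.1 p],
    fun p => by simp only [hF.2.2 p, hG.2.2 p]⟩

theorem sub (hF : SmoothPer2 F) (hG : SmoothPer2 G) : SmoothPer2 (fun p => F p - G p) :=
  ⟨hF.1.sub hG.1, fun p => by simp only [hF.2.1 p, hG.2.1 p],
    fun p => by simp only [hF.2.2 p, hG.2.2 p]⟩

theorem mul (hF : SmoothPer2 F) (hG : SmoothPer2 G) : SmoothPer2 (fun p => F p * G p) :=
  ⟨hF.1.mul hG.1, fun p => by simp only [hF.2.1 p, hG.2.1 p],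
    fun p => by simp only [hF.2.2 p, hG.2.2 p]⟩

theorem const_mul (c : ℂ) (hF : SmoothPer2 F) : SmoothPer2 (fun p => c * F p) :=
  ⟨contDiff_const.mul hF.1, fun p => by simp only [hF.2.1 p], fun p => by simp only [hF.2.2 p]⟩

theorem pdx (hF : SmoothPer2 F) : SmoothPer2 (_root_.pdx F) := by
  refine ⟨contDiff_pdx hF.1 (by simp), fun p => ?_, fun p => ?_⟩
  · have hshift : (fun t => F (t + 2 * π, p.2)) = fun t => F (t, p.2) :=
      funext fun t => hF.2.1 (t, p.2)
    change deriv (fun t => F (t, p.2)) (p.1 + 2 * π) = deriv (fun t => F (t, p.2)) p.1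
    rw [← deriv_comp_add_const, hshift]
  · have hshift : (fun t => F (t, p.2 + 2 * π)) = fun t => F (t, p.2) :=
      funext fun t => hF.2.2 (t, p.2)
    exact congrArg (deriv · p.1) hshift

theorem pdy (hF : SmoothPer2 F) : SmoothPer2 (_root_.pdy F) := by
  refine ⟨contDiff_pdy hF.1 (by simp), fun p => ?_, fun p => ?_⟩
  · have hshift : (fun t => F (p.1 + 2 * π, t)) = fun t => F (p.1, t) :=
      funext fun t => hF.2.1 (p.1, t)
    exact congrArg (deriv · p.2) hshift
  · have hshift : (fun t => F (p.1, t + 2 * π)) = fun t => F (p.1, t) :=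
      funext fun t => hF.2.2 (p.1, t)
    change deriv (fun t => F (p.1, t)) (p.2 + 2 * π) = deriv (fun t => F (p.1, t)) p.2
    rw [← deriv_comp_add_const, hshift]

theorem continuous (hF : SmoothPer2 F) : Continuous F :=
  hF.1.continuous

end SmoothPer2

section Integration

open MeasureTheory

variable {F G : F2}

theorem integ2_add (hF : Continuous F) (hG : Continuous G) :
    integ2 (fun p => F p + G p) = integ2 F + integ2 G := by
  have hslice : ∀ {H : F2}, Continuous H → ∀ y : ℝ,
      IntervalIntegrable (fun x => H (x, y)) volume 0 (2 * π) :=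
    fun hH y => (hH.comp (continuous_id.prodMk continuous_const)).intervalIntegrable _ _
  have hinner : ∀ {H : F2}, Continuous H →
      IntervalIntegrable (fun y => ∫ x in (0 : ℝ)..(2 * π), H (x, y)) volume 0 (2 * π) :=
    fun {H} hH => (continuous_parametric_intervalIntegral_of_continuous'
      (f := fun y x => H (x, y)) (hH.comp continuous_swap) 0 (2 * π)).intervalIntegrable _ _
  unfold integ2
  simp_rw [integral_add (hslice hF _) (hslice hG _)]
  exact integral_add (hinner hF) (hinner hG)

theorem integ2_const_mul (c : ℂ) : integ2 (fun p => c * F p) = c * integ2 F := by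
  simp_rw [integ2, ← smul_eq_mul, intervalIntegral.integral_smul]

theorem integ2_eq_swap (hF : Continuous F) :
    integ2 F = ∫ x in (0 : ℝ)..(2 * π), ∫ y in (0 : ℝ)..(2 * π), F (x, y) := by
  refine (intervalIntegral_intervalIntegral_swap ?_).symm
  exact (hF.continuousOn.integrableOn_compact (isCompact_uIcc.prod isCompact_uIcc)).mono_set
    (Set.prod_mono Set.uIoc_subset_uIcc Set.uIoc_subset_uIcc)

theorem integral_deriv_eq_zero_of_eq {φ φ' : ℝ → ℂ} {a b : ℝ}
    (hφ : ∀ t, HasDerivAt φ (φ' t) t) (hφ' : Continuous φ') (hab : φ b = φ a) :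
    ∫ t in a..b, φ' t = 0 := by
  rw [integral_eq_sub_of_hasDerivAt (fun t _ => hφ t) (hφ'.intervalIntegrable a b), hab, sub_self]

theorem integ2_pdx_eq_zero (hF : ContDiff ℝ 1 F)
    (hper : ∀ p : ℝ × ℝ, F (p.1 + 2 * π, p.2) = F p) : integ2 (pdx F) = 0 := by
  have hinner (y : ℝ) : ∫ x in (0 : ℝ)..(2 * π), pdx F (x, y) = 0 :=
    integral_deriv_eq_zero_of_eq (fun x => hasDerivAt_pdx (hF.differentiable one_ne_zero) x y)
      ((continuous_pdx hF).comp (continuous_id.prodMk continuous_const))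
      (by simpa using hper (0, y))
  simp [integ2, hinner]

theorem integ2_pdy_eq_zero (hF : ContDiff ℝ 1 F)
    (hper : ∀ p : ℝ × ℝ, F (p.1, p.2 + 2 * π) = F p) : integ2 (pdy F) = 0 := by
  have hinner (x : ℝ) : ∫ y in (0 : ℝ)..(2 * π), pdy F (x, y) = 0 :=
    integral_deriv_eq_zero_of_eq (fun y => hasDerivAt_pdy (hF.differentiable one_ne_zero) x y)
      ((continuous_pdy hF).comp (continuous_const.prodMk continuous_id))
      (by simpa using hper (x, 0))
  simp [integ2_eq_swap (continuous_pdy hF), hinner]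

end Integration

def coadjointPotential (c₁ : ℂ) (f u g v h w : F2) : F2 := fun p =>
  f p * h p * v p + f p * g p * w p - 2 * g p * h p * u p
    + c₁ * (h p * pdx (pdx f) p - pdx h p * pdx f p + pdx (pdx h) p * f p)

theorem SmoothPer2.coadjointPotential (c₁ : ℂ) {f u g v h w : F2} (hf : SmoothPer2 f)
    (hu : SmoothPer2 u) (hg : SmoothPer2 g) (hv : SmoothPer2 v) (hh : SmoothPer2 h)
    (hw : SmoothPer2 w) : SmoothPer2 (_root_.coadjointPotential c₁ f u g v h w) :=
  ((((hf.mul hh).mul hv).add ((hf.mul hg).mul hw)).sub (((const_mul 2 hg).mul hh).mul hu)).add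
    (const_mul c₁ (((hh.mul hf.pdx.pdx).sub (hh.pdx.mul hf.pdx)).add (hh.pdx.pdx.mul hf)))

theorem coadjoint_integrand_eq_pdx_add_pdy (c₁ c₂ : ℂ) {f u g v h w : F2}
    (hf : ContDiff ℝ 3 f) (hu : Differentiable ℝ u) (hg : Differentiable ℝ g)
    (hv : Differentiable ℝ v) (hh : ContDiff ℝ 3 h) (hw : Differentiable ℝ w) (p : ℝ × ℝ) :
    h p * (f p * pdx v p + 2 * pdx f p * v p - pdx u p * g p
        - 2 * u p * pdx g p + c₁ * pdx (pdx (pdx f)) p + c₂ * pdy u p)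
      + (f p * pdx g p - pdx f p * g p + c₂ * pdy f p) * w p
      + ((f p * pdx h p - pdx f p * h p) * v p
        + g p * (f p * pdx w p + 2 * pdx f p * w p - h p * pdx u p - 2 * pdx h p * u p))
      + c₁ * (f p * pdx (pdx (pdx h)) p)
      + c₂ * (f p * pdy w p - h p * pdy u p)
      = pdx (coadjointPotential c₁ f u g v h w) p + c₂ * pdy (fun q => f q * w q) p := by
  have hdiff : ∀ {F : F2}, ContDiff ℝ 3 F →
      Differentiable ℝ F ∧ Differentiable ℝ (pdx F) ∧ Differentiable ℝ (pdx (pdx F)) :=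
    fun hF => ⟨hF.differentiable (by simp),
      (contDiff_pdx (m := 2) hF (by norm_num)).differentiable (by simp),
      (contDiff_pdx (m := 1) (contDiff_pdx (m := 2) hF (by norm_num)) (by norm_num)).differentiable
        (by simp)⟩
  obtain ⟨hf₀, hf₁, hf₂⟩ := hdiff hf
  obtain ⟨hh₀, hh₁, hh₂⟩ := hdiff hh
  obtain ⟨x, y⟩ := p
  have hΦ := (((((hasDerivAt_pdx hf₀ x y).mul (hasDerivAt_pdx hh₀ x y)).mul
      (hasDerivAt_pdx hv x y)).add (((hasDerivAt_pdx hf₀ x y).mul (hasDerivAt_pdx hg x y)).mul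
      (hasDerivAt_pdx hw x y))).sub ((((hasDerivAt_pdx hg x y).const_mul 2).mul
      (hasDerivAt_pdx hh₀ x y)).mul (hasDerivAt_pdx hu x y))).add
    ((((((hasDerivAt_pdx hh₀ x y).mul (hasDerivAt_pdx hf₂ x y)).sub
      ((hasDerivAt_pdx hh₁ x y).mul (hasDerivAt_pdx hf₁ x y))).add
      ((hasDerivAt_pdx hh₂ x y).mul (hasDerivAt_pdx hf₀ x y)))).const_mul c₁)
  have hfw := (hasDerivAt_pdy hf₀ x y).mul (hasDerivAt_pdy hw x y)
  rw [show pdx (coadjointPotential c₁ f u g v h w) (x, y) = _ from hΦ.deriv,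
    show pdy (fun q => f q * w q) (x, y) = _ from hfw.deriv]
  simp only [Pi.mul_apply]
  ring

/-- **The coadjoint action of the centrally extended algebra `ĝ`.**
With `P = f·g_x − f_x·g + c₂·f_y` and
`Q = f·v_x + 2·f_x·v − u_x·g − 2·u·g_x + c₁·f_{xxx} + c₂·u_y`
(the formula `âd*_{(f,u)}(g,v) = (P,Q)`), one has, for every test element `(h,w)` of `g̃`,
`⟨(P,Q),(h,w)⟩ + ⟨(g,v),[(f,u),(h,w)]⟩ + c₁·μ₁((f,u),(h,w)) + c₂·μ₂((f,u),(h,w)) = 0`,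
i.e. `⟨âd*_a m, b⟩ = −⟨m,[a,b]⟩ − c₁·μ₁(a,b) − c₂·μ₂(a,b)`. -/
theorem coadjoint_action_of_extended_algebra (c₁ c₂ : ℂ) (f u g v h w P Q : F2)
    (hf : SmoothPer2 f) (hu : SmoothPer2 u) (hg : SmoothPer2 g) (hv : SmoothPer2 v)
    (hh : SmoothPer2 h) (hw : SmoothPer2 w)
    (hP : P = fun p => f p * pdx g p - pdx f p * g p + c₂ * pdy f p)
    (hQ : Q = fun p => f p * pdx v p + 2 * pdx f p * v p - pdx u p * g p
      - 2 * u p * pdx g p + c₁ * pdx (pdx (pdx f)) p + c₂ * pdy u p) :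
    integ2 (fun p => h p * Q p + P p * w p)
      + integ2 (fun p => (f p * pdx h p - pdx f p * h p) * v p
          + g p * (f p * pdx w p + 2 * pdx f p * w p - h p * pdx u p - 2 * pdx h p * u p))
      + c₁ * integ2 (fun p => f p * pdx (pdx (pdx h)) p)
      + c₂ * integ2 (fun p => f p * pdy w p - h p * pdy u p) = 0 := by
  subst hP hQ
  beta_reduce
  have hΦ := hf.coadjointPotential c₁ hu hg hv hh hw
  have hfw := hf.mul hw
  calc _ = integ2 (fun p => pdx (coadjointPotential c₁ f u g v h w) p
          + c₂ * pdy (fun q => f q * w q) p) := by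
        rw [← integ2_const_mul, ← integ2_const_mul,
          ← integ2_add, ← integ2_add, ← integ2_add]
        · exact congrArg integ2 (funext (coadjoint_integrand_eq_pdx_add_pdy c₁ c₂
            (hf.1.of_le (by norm_cast)) (hu.1.differentiable (by simp))
            (hg.1.differentiable (by simp)) (hv.1.differentiable (by simp))
            (hh.1.of_le (by norm_cast)) (hw.1.differentiable (by simp))))
        all_goals apply_rules (maxDepth := 200) [Continuous.add, Continuous.sub, Continuous.mul,
          continuous_const, SmoothPer2.continuous, SmoothPer2.pdx, SmoothPer2.pdy]
    _ = integ2 (pdx (coadjointPotential c₁ f u g v h w))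
          + c₂ * integ2 (pdy fun q => f q * w q) := by
        rw [integ2_add, integ2_const_mul]
        exacts [hΦ.pdx.continuous, continuous_const.mul hfw.pdy.continuous]
    _ = 0 := by
        rw [integ2_pdx_eq_zero (hΦ.1.of_le (by norm_cast)) hΦ.2.1,
          integ2_pdy_eq_zero (hfw.1.of_le (by norm_cast)) hfw.2.2, mul_zero, add_zero]
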